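/- The center of the subgroup Γ = ⟨σ1, σ2⟩ of GL(4,ℝ) is the cyclic subgroup generated by σ1⁴ = −I, and hence has order 2. -/

import Mathlib

open Matrix

/-- The general linear group of `4 × 4` real matrices. -/
abbrev GL4 := GL (Fin 4) ℝ

/-- rho0 : the reflection `ρ0 = diag(−1,1,1,1)`. -/
def rho0 : GL4 :=
  ⟨!![-1,0,0,0; 0,1,0,0; 0,0,1,0; 0,0,0,1],
   !![-1,0,0,0; 0,1,0,0; 0,0,1,0; 0,0,0,1],
   by ext i j; fin_cases i <;> fin_cases j <;>
      simp [Matrix.mul_apply, Fin.sum_univ_four, Matrix.one_apply, Matrix.vecHead, Matrix.vecTail],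
   by ext i j; fin_cases i <;> fin_cases j <;>
      simp [Matrix.mul_apply, Fin.sum_univ_four, Matrix.one_apply, Matrix.vecHead, Matrix.vecTail]⟩

/-- rho1 : the permutation matrix transposing coordinates 1 and 2. -/
def rho1 : GL4 :=
  ⟨!![0,1,0,0; 1,0,0,0; 0,0,1,0; 0,0,0,1],
   !![0,1,0,0; 1,0,0,0; 0,0,1,0; 0,0,0,1],
   by ext i j; fin_cases i <;> fin_cases j <;>
      simp [Matrix.mul_apply, Fin.sum_univ_four, Matrix.one_apply, Matrix.vecHead, Matrix.vecTail],
   by ext i j; fin_cases i <;> fin_cases j <;>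
      simp [Matrix.mul_apply, Fin.sum_univ_four, Matrix.one_apply, Matrix.vecHead, Matrix.vecTail]⟩

/-- rho2 : the permutation matrix transposing coordinates 2 and 3. -/
def rho2 : GL4 :=
  ⟨!![1,0,0,0; 0,0,1,0; 0,1,0,0; 0,0,0,1],
   !![1,0,0,0; 0,0,1,0; 0,1,0,0; 0,0,0,1],
   by ext i j; fin_cases i <;> fin_cases j <;>
      simp [Matrix.mul_apply, Fin.sum_univ_four, Matrix.one_apply, Matrix.vecHead, Matrix.vecTail],
   by ext i j; fin_cases i <;> fin_cases j <;>
      simp [Matrix.mul_apply, Fin.sum_univ_four, Matrix.one_apply, Matrix.vecHead, Matrix.vecTail]⟩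

/-- rho3 : the permutation matrix transposing coordinates 3 and 4. -/
def rho3 : GL4 :=
  ⟨!![1,0,0,0; 0,1,0,0; 0,0,0,1; 0,0,1,0],
   !![1,0,0,0; 0,1,0,0; 0,0,0,1; 0,0,1,0],
   by ext i j; fin_cases i <;> fin_cases j <;>
      simp [Matrix.mul_apply, Fin.sum_univ_four, Matrix.one_apply, Matrix.vecHead, Matrix.vecTail],
   by ext i j; fin_cases i <;> fin_cases j <;>
      simp [Matrix.mul_apply, Fin.sum_univ_four, Matrix.one_apply, Matrix.vecHead, Matrix.vecTail]⟩


/-- `σ1 = ρ0 ρ1 ρ2 ρ3`. -/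
def sigma1 : GL4 := rho0 * rho1 * rho2 * rho3

/-- `σ2 = ρ3 ρ2 ρ1 ρ3`. -/
def sigma2 : GL4 := rho3 * rho2 * rho1 * rho3

/-- `σ3 = ρ2 ρ3`. -/
def sigma3 : GL4 := rho2 * rho3

lemma sigma1_mem : sigma1 ∈ Subgroup.closure ({sigma1, sigma2} : Set GL4) :=
  Subgroup.subset_closure (by simp)

/-!
Both generators have determinant `1`, so `Γ ≤ SL(4,ℝ)`. A central element of `Γ` commutes with
the matrices of `σ1` and `σ2`, and the only matrices commuting with both are the scalars; a real
scalar matrix of determinant `1` is `±I`. Hence the center is `{I, -I}`, and `-I = σ1⁴`.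
-/

abbrev mapRotationGroup : Subgroup GL4 := Subgroup.closure {sigma1, sigma2}

local notation "Γ" => mapRotationGroup

lemma coe_sigma1 :
    (sigma1 : Matrix (Fin 4) (Fin 4) ℝ) = !![0,0,0,-1; 1,0,0,0; 0,1,0,0; 0,0,1,0] := by
  ext i j
  fin_cases i <;> fin_cases j <;>
    simp [sigma1, rho0, rho1, rho2, rho3, mul_apply, Fin.sum_univ_four]

lemma coe_sigma2 :
    (sigma2 : Matrix (Fin 4) (Fin 4) ℝ) = !![0,1,0,0; 0,0,0,1; 0,0,1,0; 1,0,0,0] := by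
  ext i j
  fin_cases i <;> fin_cases j <;>
    simp [sigma2, rho1, rho2, rho3, mul_apply, Fin.sum_univ_four]

lemma sigma1_pow_four : sigma1 ^ 4 = (-1 : GL4) := by
  ext i j
  rw [Units.val_pow_eq_pow_val, coe_sigma1]
  fin_cases i <;> fin_cases j <;> simp [pow_succ, mul_apply, Fin.sum_univ_four]

lemma mapRotationGroup_le_ker_det : Γ ≤ GeneralLinearGroup.det.ker := by
  rw [Subgroup.closure_le]
  rintro g (rfl | rfl) <;> ext
  · simp [coe_sigma1, det_succ_row_zero, Fin.sum_univ_succ, Fin.succAbove]; ring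
  · simp [coe_sigma2, det_succ_row_zero, Fin.sum_univ_succ, Fin.succAbove]

lemma eq_scalar_of_commute {R : Type*} [CommRing R] [IsAddTorsionFree R]
    {A : Matrix (Fin 4) (Fin 4) R}
    (h1 : Commute A !![0,0,0,-1; 1,0,0,0; 0,1,0,0; 0,0,1,0])
    (h2 : Commute A !![0,1,0,0; 0,0,0,1; 0,0,1,0; 1,0,0,0]) :
    A = scalar (Fin 4) (A 0 0) := by
  have e1 := Matrix.ext_iff.mpr h1.eq
  have e2 := Matrix.ext_iff.mpr h2.eq
  simp only [mul_apply, of_apply, cons_val', cons_val_fin_one, Fin.sum_univ_four, Fin.isValue,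
    cons_val_zero, cons_val_one, cons_val, Fin.forall_fin_succ, mul_zero, mul_one, zero_add,
    add_zero, cons_val_succ, Fin.succ_zero_eq_one, Fin.succ_one_eq_two, mul_neg, Fin.reduceSucc,
    IsEmpty.forall_iff, and_true, zero_mul, neg_mul, one_mul, neg_inj, true_and] at e1 e2
  -- the relations force `x = -x` for the off-diagonal entries `x` of the first row
  have h01 : A 0 1 = 0 := self_eq_neg.mp (by grind)
  have h02 : A 0 2 = 0 := self_eq_neg.mp (by grind)
  have h03 : A 0 3 = 0 := self_eq_neg.mp (by grind)
  ext i j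
  fin_cases i <;> fin_cases j <;> simp <;> grind

lemma eq_one_or_eq_neg_one_of_det_scalar {n R : Type*} [Fintype n] [DecidableEq n] [Nonempty n]
    [CommRing R] [LinearOrder R] [IsStrictOrderedRing R] {c : R}
    (h : (scalar n c).det = 1) : c = 1 ∨ c = -1 := by
  rw [scalar_apply, det_diagonal, Finset.prod_const, Finset.card_univ, pow_eq_one_iff_cases] at h
  grind [Fintype.card_ne_zero]

lemma eq_one_or_eq_neg_one_of_commute_sigma {g : GL4} (h1 : Commute g sigma1)
    (h2 : Commute g sigma2) (hdet : GeneralLinearGroup.det g = 1) : g = 1 ∨ g = -1 := by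
  have hscalar := eq_scalar_of_commute (coe_sigma1 ▸ h1.units_val) (coe_sigma2 ▸ h2.units_val)
  have hc := eq_one_or_eq_neg_one_of_det_scalar (n := Fin 4)
    (c := (g : Matrix (Fin 4) (Fin 4) ℝ) 0 0)
    (by rw [← hscalar, ← GeneralLinearGroup.val_det_apply, hdet, Units.val_one])
  rcases hc with hc | hc
  · left; ext1; rw [hscalar, hc, map_one, Units.val_one]
  · right; ext1; rw [hscalar, hc, map_neg, map_one, Units.val_neg, Units.val_one]

lemma center_mapRotationGroup_eq_zpowers {c : Γ} (hc : (c : GL4) = -1) :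
    Subgroup.center Γ = Subgroup.zpowers c := by
  apply le_antisymm
  · intro z hz
    have hcomm : ∀ g ∈ ({sigma1, sigma2} : Set GL4), Commute (z : GL4) g := fun g hg =>
      (congrArg Subtype.val
        (Subgroup.mem_center_iff.mp hz ⟨g, Subgroup.subset_closure hg⟩)).symm
    rcases eq_one_or_eq_neg_one_of_commute_sigma (hcomm _ (by simp)) (hcomm _ (by simp))
      (mapRotationGroup_le_ker_det z.2) with h | h
    · rw [show z = 1 from Subtype.ext h]
      exact one_mem _
    · rw [show z = c from Subtype.ext (h.trans hc.symm)]
      exact Subgroup.mem_zpowers c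
  · rw [Subgroup.zpowers_le, Subgroup.mem_center_iff]
    intro g
    ext1
    simp [hc]

lemma orderOf_eq_two_of_coe_eq_neg_one {n R : Type*} [Fintype n] [DecidableEq n] [Nonempty n]
    [CommRing R] [Nontrivial R] [IsAddTorsionFree R] {H : Subgroup (GL n R)} {c : H}
    (hc : (c : GL n R) = -1) : orderOf c = 2 := by
  refine orderOf_eq_prime (by ext1; simp [hc]) fun h => ?_
  have hentry := congrArg
    (fun g : H => ((g : GL n R) : Matrix n n R) (Classical.arbitrary n) (Classical.arbitrary n)) h
  simp only [hc, Units.val_neg, Units.val_one, Matrix.neg_apply, one_apply_eq,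
    OneMemClass.coe_one] at hentry
  exact one_ne_zero (neg_eq_self.mp hentry)

/-- The center of `Γ = ⟨σ1, σ2⟩ ≤ GL(4,ℝ)` is the cyclic subgroup generated by
`σ1⁴ = −I`, of order 2. -/
theorem center_of_map_rotation_group :
    sigma1 ^ 4 = (-1 : GL4) ∧
    Subgroup.center ↥(Subgroup.closure ({sigma1, sigma2} : Set GL4)) =
      Subgroup.zpowers (⟨sigma1 ^ 4, pow_mem sigma1_mem 4⟩ :
        ↥(Subgroup.closure ({sigma1, sigma2} : Set GL4))) ∧
    Nat.card (Subgroup.center ↥(Subgroup.closure ({sigma1, sigma2} : Set GL4))) = 2 := by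
  have hc : ((⟨sigma1 ^ 4, pow_mem sigma1_mem 4⟩ : Γ) : GL4) = -1 := sigma1_pow_four
  have hcenter := center_mapRotationGroup_eq_zpowers hc
  refine ⟨sigma1_pow_four, hcenter, ?_⟩
  rw [hcenter, Nat.card_zpowers, orderOf_eq_two_of_coe_eq_neg_one hc]
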